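/- arXiv:quant-ph/0512041 — 3 statements merged into one kernel-verified Lean document; each statement's English description precedes it below -/
import Mathlib

section
/- Let r = n − k with 0 ≤ k ≤ n, let v₁,…,v_r ∈ (𝔽₂²)ⁿ be linearly independent over 𝔽₂, let ε₁,…,ε_r ∈ {+1,−1}, and set Mⱼ = εⱼ·σ(vⱼ). Assume the Mⱼ pairwise commute and that the multiplicative group generated by M₁,…,M_r does not contain the negative of the identity matrix. Then the code subspace C = {ψ ∈ ℂ^{2ⁿ} : Mⱼψ = ψ for all j = 1,…,r} has complex dimension 2^k; i.e., an (n,k) stabilizer code protects k qubits in an n-qubit register. -/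
open Matrix

noncomputable def PX : Matrix (Fin 2) (Fin 2) ℂ := !![0, 1; 1, 0]

noncomputable def PZ : Matrix (Fin 2) (Fin 2) ℂ := !![1, 0; 0, -1]

/-- `sigma1 (a, b) = X^a · Z^b`. -/
noncomputable def sigma1 (p : ZMod 2 × ZMod 2) : Matrix (Fin 2) (Fin 2) ℂ :=
  PX ^ p.1.val * PZ ^ p.2.val

/-- n-fold Kronecker product `σ(v) = σ₁(v₁) ⊗ ⋯ ⊗ σ₁(vₙ)`, with rows and columns
indexed by `Fin n → Fin 2`. -/
noncomputable def pauliSigma {n : ℕ} (v : Fin n → ZMod 2 × ZMod 2) :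
    Matrix (Fin n → Fin 2) (Fin n → Fin 2) ℂ :=
  Matrix.of fun x y => ∏ i, sigma1 (v i) (x i) (y i)

/-- The symplectic form `ω(v,w) = Σᵢ (aᵢb′ᵢ + a′ᵢbᵢ)` over `𝔽₂`. -/
def sympOmega {n : ℕ} (v w : Fin n → ZMod 2 × ZMod 2) : ZMod 2 :=
  ∑ i, ((v i).1 * (w i).2 + (w i).1 * (v i).2)

namespace StabAux

noncomputable def tens {n : ℕ} (A : Fin n → Matrix (Fin 2) (Fin 2) ℂ) :
    Matrix (Fin n → Fin 2) (Fin n → Fin 2) ℂ :=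
  Matrix.of fun x y => ∏ i, A i (x i) (y i)

lemma pauliSigma_eq_tens {n : ℕ} (v : Fin n → ZMod 2 × ZMod 2) :
    pauliSigma v = tens fun i => sigma1 (v i) := rfl

lemma tens_mul {n : ℕ} (A B : Fin n → Matrix (Fin 2) (Fin 2) ℂ) :
    tens A * tens B = tens fun i => A i * B i := by
  ext x y
  simp only [tens, Matrix.mul_apply, Matrix.of_apply, ← Finset.prod_mul_distrib]
  rw [Finset.prod_univ_sum]
  rw [← Fintype.piFinset_univ]

lemma tens_one {n : ℕ} : tens (fun _ : Fin n => (1 : Matrix (Fin 2) (Fin 2) ℂ)) = 1 := by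
  ext x y
  simp only [tens, Matrix.of_apply, Matrix.one_apply]
  by_cases h : x = y
  · subst h; simp
  · rw [if_neg h]
    obtain ⟨i, hi⟩ := Function.ne_iff.mp h
    exact Finset.prod_eq_zero (Finset.mem_univ i) (by rw [if_neg hi])

lemma tens_smul {n : ℕ} (c : Fin n → ℂ) (A : Fin n → Matrix (Fin 2) (Fin 2) ℂ) :
    tens (fun i => c i • A i) = (∏ i, c i) • tens A := by
  ext x y
  simp [tens, Finset.prod_mul_distrib]

lemma trace_tens {n : ℕ} (A : Fin n → Matrix (Fin 2) (Fin 2) ℂ) :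
    (tens A).trace = ∏ i, (A i).trace := by
  simp only [Matrix.trace, Matrix.diag, tens, Matrix.of_apply]
  rw [Finset.prod_univ_sum, ← Fintype.piFinset_univ]

lemma zmod2_cases (a : ZMod 2) : a = 0 ∨ a = 1 := by revert a; decide

lemma sigma1_zero : sigma1 0 = 1 := by
  simp [sigma1]

lemma sigma1_mul (p q : ZMod 2 × ZMod 2) :
    sigma1 p * sigma1 q = ((-1 : ℂ) ^ (q.1 * p.2).val) • sigma1 (p + q) := by
  obtain ⟨a, b⟩ := p
  obtain ⟨c, d⟩ := q
  rcases zmod2_cases a with ha | ha <;> rcases zmod2_cases b with hb | hb <;>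
    rcases zmod2_cases c with hc | hc <;> rcases zmod2_cases d with hd | hd <;>
    subst ha hb hc hd <;>
    simp [sigma1, PX, PZ, show ((0:ZMod 2)).val = 0 from rfl,
      show ((1:ZMod 2)).val = 1 from rfl, show ((1+1:ZMod 2)).val = 0 from rfl,
      show ((0+1:ZMod 2)).val = 1 from rfl, show ((1+0:ZMod 2)).val = 1 from rfl,
      show ((0+0:ZMod 2)).val = 0 from rfl, pow_succ] <;>
    ext i j <;> fin_cases i <;> fin_cases j <;>
    simp [Matrix.mul_apply, Fin.sum_univ_two]

lemma trace_sigma1_ne {p : ZMod 2 × ZMod 2} (hp : p ≠ 0) : (sigma1 p).trace = 0 := by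
  obtain ⟨a, b⟩ := p
  rcases zmod2_cases a with ha | ha <;> rcases zmod2_cases b with hb | hb <;>
    subst ha hb <;> first
  | exact absurd rfl hp
  | simp [sigma1, PX, PZ, show ((0:ZMod 2)).val = 0 from rfl,
      show ((1:ZMod 2)).val = 1 from rfl, pow_succ, Matrix.trace, Matrix.diag,
      Fin.sum_univ_two, Matrix.mul_apply]

end StabAux

namespace StabAux

lemma pauliSigma_zero {n : ℕ} : pauliSigma (0 : Fin n → ZMod 2 × ZMod 2) = 1 := by
  rw [pauliSigma_eq_tens]
  simp only [Pi.zero_apply, sigma1_zero]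
  exact tens_one

lemma pauliSigma_mul {n : ℕ} (v w : Fin n → ZMod 2 × ZMod 2) :
    ∃ c : ℂ, (c = 1 ∨ c = -1) ∧ pauliSigma v * pauliSigma w = c • pauliSigma (v + w) := by
  refine ⟨(-1 : ℂ) ^ (∑ i, ((w i).1 * (v i).2).val), neg_one_pow_eq_or ℂ _, ?_⟩
  rw [pauliSigma_eq_tens, pauliSigma_eq_tens, tens_mul]
  have : (fun i => sigma1 (v i) * sigma1 (w i)) =
      fun i => ((-1 : ℂ) ^ ((w i).1 * (v i).2).val) • sigma1 (v i + w i) := by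
    funext i; exact sigma1_mul (v i) (w i)
  rw [this, tens_smul, Finset.prod_pow_eq_pow_sum]
  rfl

lemma trace_pauliSigma_ne {n : ℕ} {w : Fin n → ZMod 2 × ZMod 2} (hw : w ≠ 0) :
    (pauliSigma w).trace = 0 := by
  rw [pauliSigma_eq_tens, trace_tens]
  obtain ⟨i, hi⟩ := Function.ne_iff.mp hw
  exact Finset.prod_eq_zero (Finset.mem_univ i) (trace_sigma1_ne hi)

lemma trace_one' {n : ℕ} :
    (1 : Matrix (Fin n → Fin 2) (Fin n → Fin 2) ℂ).trace = (2 : ℂ) ^ n := by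
  rw [Matrix.trace_one]
  simp [Fintype.card_fun]

end StabAux


open StabAux

/-- An (n,k) stabilizer code protects k qubits in an n-qubit register: the joint fixed
subspace of n−k independent commuting stabilizer generators Mⱼ = εⱼ·σ(vⱼ) (whose
generated multiplicative group does not contain −1) has complex dimension 2^k. -/
theorem stabilizer_code_dimension (n k : ℕ) (hk : k ≤ n)
    (v : Fin (n - k) → Fin n → ZMod 2 × ZMod 2)
    (hind : LinearIndependent (ZMod 2) v)
    (ε : Fin (n - k) → ℂ) (hε : ∀ j, ε j = 1 ∨ ε j = -1)
    (M : Fin (n - k) → Matrix (Fin n → Fin 2) (Fin n → Fin 2) ℂ)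
    (hM : ∀ j, M j = ε j • pauliSigma (v j))
    (hcomm : ∀ j j', M j * M j' = M j' * M j)
    (hneg : (-1 : Matrix (Fin n → Fin 2) (Fin n → Fin 2) ℂ)
      ∉ Submonoid.closure (Set.range M)) :
    Module.finrank ℂ
      ↥(⨅ j : Fin (n - k),
          LinearMap.ker (Matrix.toLin' (M j) - LinearMap.id)) = 2 ^ k := by
  classical
  have hco : ∀ a b : Fin (n - k), Commute (M a) (M b) := fun a b => hcomm a b
  have hcM : ∀ s : Finset (Fin (n - k)),
      (s : Set (Fin (n - k))).Pairwise fun a b => Commute (M a) (M b) :=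
    fun s a _ b _ _ => hco a b
  have hc1 : ∀ s : Finset (Fin (n - k)),
      (s : Set (Fin (n - k))).Pairwise fun a b => Commute (1 + M a) (1 + M b) :=
    fun s a _ b _ _ =>
      Commute.add_right (Commute.one_right _)
        (Commute.add_left (Commute.one_left _) (hco a b))
  -- M j squares to one
  have hsq : ∀ j, M j * M j = 1 := by
    intro j
    obtain ⟨c, hc, hmul⟩ := pauliSigma_mul (v j) (v j)
    have h2 : ∀ x : ZMod 2 × ZMod 2, x + x = 0 := by decide
    have hvv : v j + v j = 0 := funext fun i => h2 (v j i)
    have hee : ε j * ε j = 1 := by rcases hε j with h | h <;> rw [h] <;> norm_num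
    have hM2 : M j * M j = c • 1 := by
      rw [hM j, Matrix.smul_mul, Matrix.mul_smul, hmul, hvv, pauliSigma_zero,
        smul_smul, smul_smul]
      rw [hee, one_mul]
    rcases hc with h | h
    · rw [hM2, h, one_smul]
    · exfalso
      apply hneg
      have : M j * M j ∈ Submonoid.closure (Set.range M) :=
        Submonoid.mul_mem _ (Submonoid.subset_closure ⟨j, rfl⟩)
          (Submonoid.subset_closure ⟨j, rfl⟩)
      rwa [hM2, h, neg_smul, one_smul] at this
  -- the (unnormalized) projector
  set N : Matrix (Fin n → Fin 2) (Fin n → Fin 2) ℂ :=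
    Finset.univ.noncommProd (fun j => 1 + M j) (hc1 _) with hN
  set Q : Finset (Fin (n - k)) → Matrix (Fin n → Fin 2) (Fin n → Fin 2) ℂ :=
    fun t => t.noncommProd M (hcM t) with hQ
  set P : Matrix (Fin n → Fin 2) (Fin n → Fin 2) ℂ := ((2 : ℂ) ^ (n - k))⁻¹ • N with hP
  have h2r : ((2 : ℂ) ^ (n - k)) ≠ 0 := pow_ne_zero _ two_ne_zero
  have hQins : ∀ (a : Fin (n - k)) (t : Finset (Fin (n - k))), a ∉ t →
      Q (insert a t) = M a * Q t := by
    intro a t ha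
    simp only [hQ]
    rw [Finset.noncommProd_insert_of_notMem _ _ _ _ ha]
  -- M j * N = N
  have hMN : ∀ j, M j * N = N := by
    intro j
    have h1 : (1 + M j) * (Finset.univ.erase j).noncommProd (fun i => 1 + M i)
        (hc1 _) = N := by
      rw [hN, ← Finset.mul_noncommProd_erase Finset.univ (Finset.mem_univ j)
        (fun i => 1 + M i) (hc1 _)]
    rw [← h1, ← mul_assoc]
    congr 1
    rw [mul_add, mul_one, hsq j, add_comm]
  have hMP : ∀ j, M j * P = P := by
    intro j
    rw [hP, Matrix.mul_smul, hMN j]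
  -- fixed vectors
  have hPfix : ∀ x : (Fin n → Fin 2) → ℂ, (∀ j, M j *ᵥ x = x) → P *ᵥ x = x := by
    intro x hx
    have key : ∀ s : Finset (Fin (n - k)),
        (s.noncommProd (fun j => 1 + M j) (hc1 _)) *ᵥ x
          = ((2 : ℂ) ^ s.card) • x := by
      intro s
      induction s using Finset.induction_on with
      | empty => simp
      | @insert a s ha ih =>
        rw [Finset.noncommProd_insert_of_notMem _ _ _ _ ha, ← Matrix.mulVec_mulVec, ih,
          Matrix.mulVec_smul, Matrix.add_mulVec, Matrix.one_mulVec, hx a,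
          Finset.card_insert_of_notMem ha, ← two_smul ℂ x, smul_smul, pow_succ, mul_comm]
    have hNx : N *ᵥ x = ((2 : ℂ) ^ (n - k)) • x := by
      have := key Finset.univ
      rwa [Finset.card_univ, Fintype.card_fin] at this
    rw [hP, Matrix.smul_mulVec, hNx, smul_smul, inv_mul_cancel₀ h2r, one_smul]
  -- expansion of N as a sum over subsets
  have hexp : ∀ s : Finset (Fin (n - k)),
      s.noncommProd (fun j => 1 + M j) (hc1 _)
        = ∑ t ∈ s.powerset, Q t := by
    intro s
    induction s using Finset.induction_on with
    | empty => simp [hQ]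
    | @insert a s ha ih =>
      rw [Finset.noncommProd_insert_of_notMem _ _ _ _ ha, ih, Finset.sum_powerset_insert ha]
      rw [add_mul, one_mul, Finset.mul_sum]
      congr 1
      refine Finset.sum_congr rfl fun t ht => ?_
      have hat : a ∉ t := fun h => ha (Finset.mem_powerset.mp ht h)
      rw [hQins a t hat]
  -- products of generators are scalar multiples of Pauli matrices
  have hQform : ∀ t : Finset (Fin (n - k)), ∃ c : ℂ, Q t = c • pauliSigma (∑ j ∈ t, v j) := by
    intro t
    induction t using Finset.induction_on with
    | empty => exact ⟨1, by simp [hQ, pauliSigma_zero]⟩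
    | @insert a t ha ih =>
      obtain ⟨c, hc⟩ := ih
      obtain ⟨c', _, hmul⟩ := pauliSigma_mul (v a) (∑ j ∈ t, v j)
      refine ⟨ε a * c * c', ?_⟩
      rw [hQins a t ha, hc, hM a,
        Matrix.smul_mul, Matrix.mul_smul, hmul, Finset.sum_insert ha,
        smul_smul, smul_smul, mul_assoc]
  -- nonzero sums
  have hsum_ne : ∀ t : Finset (Fin (n - k)), t.Nonempty → (∑ j ∈ t, v j) ≠ 0 := by
    rintro t ⟨a, ha⟩ h0
    have hlin := Fintype.linearIndependent_iff.mp hind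
      (fun j => if j ∈ t then (1 : ZMod 2) else 0)
    have : (if a ∈ t then (1 : ZMod 2) else 0) = 0 := by
      apply hlin _ a
      simp only [ite_smul, one_smul, zero_smul]
      rw [Finset.sum_ite_mem, Finset.univ_inter]
      exact h0
    rw [if_pos ha] at this
    exact one_ne_zero this
  -- trace of Q t
  have htrQ : ∀ t : Finset (Fin (n - k)), t ≠ ∅ → (Q t).trace = 0 := by
    intro t ht
    obtain ⟨c, hc⟩ := hQform t
    rw [hc, Matrix.trace_smul, trace_pauliSigma_ne (hsum_ne t (Finset.nonempty_iff_ne_empty.mpr ht)),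
      smul_zero]
  -- trace of P
  have htrP : P.trace = (2 : ℂ) ^ k := by
    rw [hP, Matrix.trace_smul, hN, hexp Finset.univ, Matrix.trace_sum]
    rw [Finset.sum_eq_single ∅ (fun t _ ht => htrQ t ht) (by simp)]
    have hQ0 : (Q ∅).trace = (2 : ℂ) ^ n := by
      rw [hQ]
      simp only [Finset.noncommProd_empty]
      exact trace_one'
    rw [hQ0, smul_eq_mul]
    have hpow : (2 : ℂ) ^ n = 2 ^ k * 2 ^ (n - k) := by
      rw [← pow_add]; congr 1; omega
    rw [hpow, mul_comm ((2 : ℂ) ^ k), ← mul_assoc, inv_mul_cancel₀ h2r, one_mul]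
  -- the projection
  set p : Submodule ℂ ((Fin n → Fin 2) → ℂ) :=
    ⨅ j : Fin (n - k), LinearMap.ker (Matrix.toLin' (M j) - LinearMap.id) with hp
  have hproj : LinearMap.IsProj p (Matrix.toLin' P) := by
    constructor
    · intro x
      rw [hp, Submodule.mem_iInf]
      intro j
      rw [LinearMap.mem_ker, LinearMap.sub_apply, LinearMap.id_apply, sub_eq_zero,
        Matrix.toLin'_apply, Matrix.toLin'_apply, Matrix.mulVec_mulVec, hMP j]
    · intro x hx
      rw [hp, Submodule.mem_iInf] at hx
      have hfx : ∀ j, M j *ᵥ x = x := by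
        intro j
        have := hx j
        rw [LinearMap.mem_ker, LinearMap.sub_apply, LinearMap.id_apply, sub_eq_zero,
          Matrix.toLin'_apply] at this
        exact this
      rw [Matrix.toLin'_apply]
      exact hPfix x hfx
  have htr := hproj.trace
  have htr2 : LinearMap.trace ℂ _ (Matrix.toLin' P) = P.trace := by
    rw [LinearMap.trace_eq_matrix_trace ℂ (Pi.basisFun ℂ (Fin n → Fin 2)),
      LinearMap.toMatrix_eq_toMatrix', LinearMap.toMatrix'_toLin']
  rw [htr2, htrP] at htr
  have : ((2 : ℂ) ^ k) = ((2 ^ k : ℕ) : ℂ) := by push_cast; ring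
  rw [this] at htr
  exact_mod_cast htr.symm
end

section
/- Let r = n − k, let v₁,…,v_r ∈ (𝔽₂²)ⁿ be linearly independent over 𝔽₂, let ε₁,…,ε_r ∈ {+1,−1}, and set Mⱼ = εⱼ·σ(vⱼ). Assume the Mⱼ pairwise commute and that the multiplicative group generated by M₁,…,M_r does not contain the negative of the identity matrix. Then the trace of the matrix Π = ∏_{j=1}^{r} (I + Mⱼ)/2 equals 2^k. -/
open Matrix

lemma sigma1_mul (p q : ZMod 2 × ZMod 2) :
    sigma1 p * sigma1 q = ((-1 : ℂ) ^ ((p.2 * q.1).val)) • sigma1 (p + q) := by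
  obtain ⟨a, b⟩ := p; obtain ⟨a', b'⟩ := q
  have h01 : ∀ x : ZMod 2, x = 0 ∨ x = 1 := by decide
  rcases h01 a with rfl | rfl <;> rcases h01 b with rfl | rfl <;> rcases h01 a' with rfl | rfl <;> rcases h01 b' with rfl | rfl <;>
    (ext i j; fin_cases i <;> fin_cases j <;>
      simp [sigma1, PX, PZ, Prod.mk_add_mk, Matrix.mul_apply,
        Fin.sum_univ_two, pow_succ, ZMod.val_zero, ZMod.val_one, show ((1:ZMod 2)+1) = 0 from by decide])

lemma sigma1_trace_zero (p : ZMod 2 × ZMod 2) (hp : p ≠ 0) :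
    Matrix.trace (sigma1 p) = 0 := by
  obtain ⟨a, b⟩ := p
  have h01 : ∀ x : ZMod 2, x = 0 ∨ x = 1 := by decide
  rcases h01 a with rfl | rfl <;> rcases h01 b with rfl | rfl <;>
    simp_all [sigma1, PX, PZ, Matrix.trace, ZMod.val_zero, ZMod.val_one, Prod.ext_iff,
      Matrix.diag, Fin.sum_univ_two]

lemma pauliSigma_mul {n : ℕ} (v w : Fin n → ZMod 2 × ZMod 2) :
    ∃ c : ℂ, pauliSigma v * pauliSigma w = c • pauliSigma (v + w) := by
  refine ⟨∏ i, (-1 : ℂ) ^ (((v i).2 * (w i).1).val), ?_⟩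
  ext x y
  have h : (pauliSigma v * pauliSigma w) x y
      = ∏ i, (sigma1 (v i) * sigma1 (w i)) (x i) (y i) := by
    rw [Matrix.mul_apply]
    simp only [pauliSigma, Matrix.of_apply, Matrix.mul_apply]
    rw [Fintype.prod_sum fun i t => sigma1 (v i) (x i) t * sigma1 (w i) t (y i)]
    exact Finset.sum_congr rfl fun z _ => (Finset.prod_mul_distrib).symm
  rw [h]
  simp only [sigma1_mul, Matrix.smul_apply, pauliSigma, Matrix.of_apply, smul_eq_mul,
    Pi.add_apply]
  rw [Finset.prod_mul_distrib]

lemma pauliSigma_trace_zero {n : ℕ} (u : Fin n → ZMod 2 × ZMod 2) (hu : u ≠ 0) :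
    Matrix.trace (pauliSigma u) = 0 := by
  obtain ⟨i0, hi0⟩ : ∃ i, u i ≠ 0 := by
    by_contra h; push_neg at h; exact hu (funext h)
  have h : Matrix.trace (pauliSigma u) = ∏ i, Matrix.trace (sigma1 (u i)) := by
    simp only [Matrix.trace, Matrix.diag, pauliSigma, Matrix.of_apply]
    exact (Fintype.prod_sum fun i t => sigma1 (u i) t t).symm
  rw [h]
  exact Finset.prod_eq_zero (Finset.mem_univ i0) (sigma1_trace_zero _ hi0)

/-- the basic factor `(I + c·σ(w))/2` associated to a pair `(c, w)`. -/
noncomputable def gMat {n : ℕ} (p : ℂ × (Fin n → ZMod 2 × ZMod 2)) :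
    Matrix (Fin n → Fin 2) (Fin n → Fin 2) ℂ :=
  (2 : ℂ)⁻¹ • (1 + p.1 • pauliSigma p.2)

lemma trace_pauli_mul_prod {n : ℕ} :
    ∀ (l : List (ℂ × (Fin n → ZMod 2 × ZMod 2))) (u : Fin n → ZMod 2 × ZMod 2),
    (∀ s : List (ℂ × (Fin n → ZMod 2 × ZMod 2)), s.Sublist l → u + (s.map Prod.snd).sum ≠ 0) →
      Matrix.trace (pauliSigma u * (l.map gMat).prod) = 0 := by
  intro l
  induction l with
  | nil =>
    intro u h
    have hu : u ≠ 0 := by simpa using h [] (List.nil_sublist _)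
    simpa using pauliSigma_trace_zero u hu
  | cons p l ih =>
    intro u h
    obtain ⟨c, hc⟩ := pauliSigma_mul u p.2
    have key : pauliSigma u * ((p :: l).map gMat).prod
        = (2 : ℂ)⁻¹ • (pauliSigma u * (l.map gMat).prod
            + (p.1 * c) • (pauliSigma (u + p.2) * (l.map gMat).prod)) := by
      simp only [List.map_cons, List.prod_cons, gMat]
      rw [Matrix.smul_mul, Matrix.mul_smul]
      congr 1
      rw [add_mul, one_mul, mul_add]
      congr 1
      rw [Matrix.smul_mul, Matrix.mul_smul, ← Matrix.mul_assoc, hc,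
        Matrix.smul_mul, smul_smul]
    rw [key, Matrix.trace_smul, Matrix.trace_add, Matrix.trace_smul]
    have h1 : Matrix.trace (pauliSigma u * (l.map gMat).prod) = 0 :=
      ih u fun s hs => h s (hs.cons p)
    have h2 : Matrix.trace (pauliSigma (u + p.2) * (l.map gMat).prod) = 0 := by
      refine ih (u + p.2) fun s hs => ?_
      have := h (p :: s) (hs.cons₂ p)
      simpa [add_assoc] using this
    rw [h1, h2]
    simp

lemma trace_prod_gMat {n : ℕ} :
    ∀ (l : List (ℂ × (Fin n → ZMod 2 × ZMod 2))),
    (∀ s : List (ℂ × (Fin n → ZMod 2 × ZMod 2)), s.Sublist l → s ≠ [] → (s.map Prod.snd).sum ≠ 0) →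
      Matrix.trace ((l.map gMat).prod) = 2 ^ n * ((2 : ℂ)⁻¹) ^ l.length := by
  intro l
  induction l with
  | nil =>
    intro _
    simp [Matrix.trace_one, Fintype.card_fun]
  | cons p l ih =>
    intro h
    have key : ((p :: l).map gMat).prod
        = (2 : ℂ)⁻¹ • ((l.map gMat).prod + p.1 • (pauliSigma p.2 * (l.map gMat).prod)) := by
      simp only [List.map_cons, List.prod_cons, gMat]
      rw [Matrix.smul_mul]
      congr 1
      rw [add_mul, one_mul, Matrix.smul_mul]
    rw [key, Matrix.trace_smul, Matrix.trace_add, Matrix.trace_smul]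
    have h1 : Matrix.trace ((l.map gMat).prod) = 2 ^ n * ((2 : ℂ)⁻¹) ^ l.length :=
      ih fun s hs hne => h s (hs.cons p) hne
    have h2 : Matrix.trace (pauliSigma p.2 * (l.map gMat).prod) = 0 := by
      refine trace_pauli_mul_prod l p.2 fun s hs => ?_
      have := h (p :: s) (hs.cons₂ p) (List.cons_ne_nil _ _)
      simpa using this
    rw [h1, h2]
    simp only [List.length_cons, smul_eq_mul, mul_zero, add_zero, pow_succ]
    ring

/-- The trace of the projector Π = ∏ⱼ (I + Mⱼ)/2 onto an (n,k) stabilizer code equals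
2^k, where Mⱼ = εⱼ·σ(vⱼ) are n−k independent commuting generators whose generated
multiplicative group does not contain −1. -/
theorem stabilizer_projector_trace (n k : ℕ) (hk : k ≤ n)
    (v : Fin (n - k) → Fin n → ZMod 2 × ZMod 2)
    (hind : LinearIndependent (ZMod 2) v)
    (ε : Fin (n - k) → ℂ) (hε : ∀ j, ε j = 1 ∨ ε j = -1)
    (M : Fin (n - k) → Matrix (Fin n → Fin 2) (Fin n → Fin 2) ℂ)
    (hM : ∀ j, M j = ε j • pauliSigma (v j))
    (hcomm : ∀ j j', M j * M j' = M j' * M j)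
    (hneg : (-1 : Matrix (Fin n → Fin 2) (Fin n → Fin 2) ℂ)
      ∉ Submonoid.closure (Set.range M)) :
    Matrix.trace
      (List.ofFn (fun j : Fin (n - k) => ((2 : ℂ)⁻¹) • (1 + M j))).prod = 2 ^ k := by
  classical
  set L : List (ℂ × (Fin n → ZMod 2 × ZMod 2)) := List.ofFn fun j => (ε j, v j) with hL
  have hlist : List.ofFn (fun j : Fin (n - k) => ((2 : ℂ)⁻¹) • (1 + M j))
      = L.map gMat := by
    rw [hL, List.map_ofFn]
    simp only [hM]
    rfl
  -- the key hypothesis: no nonempty sub-sum of the `v j` vanishes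
  have hsum : ∀ s, s.Sublist L → s ≠ [] → (s.map Prod.snd).sum ≠ 0 := by
    intro s hs hne hzero
    have hsnd : (s.map Prod.snd).Sublist (L.map Prod.snd) := hs.map Prod.snd
    have hLsnd : L.map Prod.snd = (List.finRange (n - k)).map v := by
      rw [hL, List.map_ofFn, List.ofFn_eq_map]; rfl
    rw [hLsnd] at hsnd
    obtain ⟨t, ht, hts⟩ := List.sublist_map_iff.mp hsnd
    have htnd : t.Nodup := (List.nodup_finRange _).sublist ht
    have htne : t ≠ [] := by
      intro h0
      apply hne
      rw [h0] at hts
      simpa using (List.map_eq_nil_iff.mp hts)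
    obtain ⟨j0, hj0⟩ := List.exists_mem_of_ne_nil t htne
    have hsum' : ∑ j ∈ t.toFinset, v j = 0 := by
      rw [List.sum_toFinset _ htnd, ← hts, hzero]
    have hg := Fintype.linearIndependent_iff.mp hind
      (fun j => if j ∈ t.toFinset then (1 : ZMod 2) else 0)
    have hz : ∑ i, (if i ∈ t.toFinset then (1 : ZMod 2) else 0) • v i = 0 := by
      have hrw : ∀ x : Fin (n - k), (if x ∈ t.toFinset then (1 : ZMod 2) else 0) • v x
          = if x ∈ t.toFinset then v x else 0 := fun x => by split <;> simp
      rw [Finset.sum_congr rfl fun x _ => hrw x, Finset.sum_ite_mem, Finset.univ_inter, hsum']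
    have hj := hg hz j0
    rw [if_pos (List.mem_toFinset.mpr hj0)] at hj
    exact one_ne_zero hj
  rw [hlist, trace_prod_gMat L hsum]
  have hlen : L.length = n - k := by rw [hL, List.length_ofFn]
  rw [hlen]
  have h2 : (2 : ℂ) ^ n = 2 ^ k * 2 ^ (n - k) := by
    rw [← pow_add]; congr 1; omega
  rw [h2, inv_pow, mul_assoc, mul_inv_cancel₀ (pow_ne_zero _ two_ne_zero), mul_one]
end

section
/- Syndrome measurement detects the symplectic product of the error with the stabilizer generator: let w, v ∈ (𝔽₂²)ⁿ, let ε ∈ {+1,−1}, set M = ε·σ(w), and let ψ ∈ ℂ^{2ⁿ} be a unit vector with Mψ = ψ. Then for the corrupted state ψ′ = σ(v)ψ one has ⟨ψ′, M ψ′⟩ = (−1)^{ω(w,v)}, and hence the syndrome bit (1 − ⟨ψ′, M ψ′⟩)/2 equals ω(w,v) (viewed as 0 or 1). -/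
open Matrix

noncomputable def kron {n : ℕ} (f : Fin n → Matrix (Fin 2) (Fin 2) ℂ) :
    Matrix (Fin n → Fin 2) (Fin n → Fin 2) ℂ :=
  Matrix.of fun x y => ∏ i, f i (x i) (y i)

lemma kron_mul {n : ℕ} (f g : Fin n → Matrix (Fin 2) (Fin 2) ℂ) :
    kron f * kron g = kron (fun i => f i * g i) := by
  ext x y
  simp only [kron, Matrix.mul_apply, Matrix.of_apply]
  rw [Finset.prod_univ_sum, Fintype.piFinset_univ]
  simp [Finset.prod_mul_distrib]

lemma kron_conjTranspose {n : ℕ} (f : Fin n → Matrix (Fin 2) (Fin 2) ℂ) :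
    (kron f)ᴴ = kron (fun i => (f i)ᴴ) := by
  ext x y
  simp [kron, Matrix.conjTranspose_apply, map_prod]

lemma kron_one {n : ℕ} : kron (fun _ : Fin n => (1 : Matrix (Fin 2) (Fin 2) ℂ)) = 1 := by
  ext x y
  simp [kron, Matrix.one_apply, Finset.prod_boole, funext_iff]

lemma kron_smul {n : ℕ} (c : Fin n → ℂ) (f : Fin n → Matrix (Fin 2) (Fin 2) ℂ) :
    kron (fun i => c i • f i) = (∏ i, c i) • kron f := by
  ext x y
  simp [kron, Finset.prod_mul_distrib]

lemma zmod2_cases (a : ZMod 2) : a = 0 ∨ a = 1 := by revert a; decide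

lemma sigma1_comm (p q : ZMod 2 × ZMod 2) :
    sigma1 p * sigma1 q
      = ((-1 : ℂ) ^ (p.1 * q.2 + q.1 * p.2).val) • (sigma1 q * sigma1 p) := by
  obtain ⟨a, b⟩ := p; obtain ⟨c, d⟩ := q
  rcases zmod2_cases a with ha | ha <;> rcases zmod2_cases b with hb | hb <;>
    rcases zmod2_cases c with hc | hc <;> rcases zmod2_cases d with hd | hd <;>
    subst ha hb hc hd <;>
    norm_num [sigma1, PX, PZ, Matrix.mul_fin_two, show ((0:ZMod 2)).val = 0 from rfl,
      show ((1:ZMod 2)).val = 1 from rfl, show ((2:ZMod 2)).val = 0 from rfl]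

lemma sigma1_unitary (p : ZMod 2 × ZMod 2) : (sigma1 p)ᴴ * sigma1 p = 1 := by
  obtain ⟨a, b⟩ := p
  rcases zmod2_cases a with ha | ha <;> rcases zmod2_cases b with hb | hb <;>
    subst ha hb <;>
    norm_num [sigma1, PX, PZ, Matrix.mul_fin_two, show ((0:ZMod 2)).val = 0 from rfl,
      show ((1:ZMod 2)).val = 1 from rfl] <;>
    ext i j <;> fin_cases i <;> fin_cases j <;>
    simp [Matrix.mul_apply, Fin.sum_univ_two, Matrix.one_apply]

lemma chi_sum {ι : Type*} (s : Finset ι) (F : ι → ZMod 2) :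
    (-1 : ℂ) ^ (∑ i ∈ s, F i).val = ∏ i ∈ s, (-1 : ℂ) ^ (F i).val := by
  classical
  induction s using Finset.induction with
  | empty => simp
  | insert _ _ h ih =>
    rw [Finset.sum_insert h, Finset.prod_insert h, ← ih]
    rcases zmod2_cases (F _) with h1 | h1 <;> rcases zmod2_cases (∑ i ∈ _, F i) with h2 | h2 <;>
      rw [h1, h2] <;>
      norm_num [show ((2:ZMod 2)).val = 0 from rfl, show ((1:ZMod 2)).val = 1 from rfl]

lemma pauliSigma_eq_kron {n : ℕ} (v : Fin n → ZMod 2 × ZMod 2) :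
    pauliSigma v = kron (fun i => sigma1 (v i)) := rfl

lemma pauliSigma_comm {n : ℕ} (w v : Fin n → ZMod 2 × ZMod 2) :
    pauliSigma w * pauliSigma v
      = ((-1 : ℂ) ^ (sympOmega w v).val) • (pauliSigma v * pauliSigma w) := by
  rw [pauliSigma_eq_kron, pauliSigma_eq_kron, kron_mul, kron_mul]
  have : (fun i => sigma1 (w i) * sigma1 (v i))
      = fun i => ((-1 : ℂ) ^ ((w i).1 * (v i).2 + (v i).1 * (w i).2).val) •
          (sigma1 (v i) * sigma1 (w i)) := by
    funext i; exact sigma1_comm (w i) (v i)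
  rw [this, kron_smul, sympOmega, chi_sum]

lemma pauliSigma_unitary {n : ℕ} (v : Fin n → ZMod 2 × ZMod 2) :
    (pauliSigma v)ᴴ * pauliSigma v = 1 := by
  rw [pauliSigma_eq_kron, kron_conjTranspose, kron_mul]
  simp only [sigma1_unitary]
  exact kron_one

open scoped Matrix in
/-- Syndrome measurement detects the symplectic product of the error with the stabilizer
generator: if M = ε·σ(w) stabilizes the unit vector ψ and ψ′ = σ(v)ψ, then
⟨ψ′, M ψ′⟩ = (−1)^{ω(w,v)}, so the syndrome bit (1 − ⟨ψ′, M ψ′⟩)/2 equals ω(w,v). -/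
theorem syndrome_measurement (n : ℕ) (w v : Fin n → ZMod 2 × ZMod 2)
    (ε : ℂ) (hε : ε = 1 ∨ ε = -1)
    (M : Matrix (Fin n → Fin 2) (Fin n → Fin 2) ℂ) (hM : M = ε • pauliSigma w)
    (ψ : (Fin n → Fin 2) → ℂ)
    (hunit : star ψ ⬝ᵥ ψ = 1)
    (hstab : M.mulVec ψ = ψ)
    (ψ' : (Fin n → Fin 2) → ℂ) (hψ' : ψ' = (pauliSigma v).mulVec ψ) :
    star ψ' ⬝ᵥ M.mulVec ψ' = (if sympOmega w v = 0 then (1 : ℂ) else -1) ∧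
    (1 - star ψ' ⬝ᵥ M.mulVec ψ') / 2 = ((sympOmega w v).val : ℂ) := by
  set s : ℂ := (-1 : ℂ) ^ (sympOmega w v).val with hs
  have hnorm : star ψ' ⬝ᵥ ψ' = 1 := by
    rw [hψ', Matrix.star_mulVec, Matrix.dotProduct_mulVec, Matrix.vecMul_vecMul,
      pauliSigma_unitary, Matrix.vecMul_one, hunit]
  have hcomm : M * pauliSigma v = s • (pauliSigma v * M) := by
    rw [hM, Matrix.smul_mul, pauliSigma_comm, Matrix.mul_smul]
    rw [smul_comm]
  have hMψ' : M.mulVec ψ' = s • ψ' := by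
    rw [hψ', Matrix.mulVec_mulVec, hcomm, Matrix.smul_mulVec,
      ← Matrix.mulVec_mulVec, hstab]
  have hval : star ψ' ⬝ᵥ M.mulVec ψ' = s := by
    rw [hMψ', dotProduct_smul, hnorm, smul_eq_mul, mul_one]
  rcases zmod2_cases (sympOmega w v) with h | h <;>
    simp only [hval, hs, h] <;>
    norm_num [show ((0:ZMod 2)).val = 0 from rfl, show ((1:ZMod 2)).val = 1 from rfl]
end
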